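/- arXiv:1505.07578 — 3 statements merged into one kernel-verified Lean document; each statement's English description precedes it below -/
import Mathlib

section
/- Let S be a recursively enumerable set of nonempty lists of natural numbers. If X is a maximal element of the quasivariety V(S), then the complement Xᶜ = ℕ \ X is enumeration reducible to X: Xᶜ ≤ₑ X. -/
/-- A set `X ⊆ ℕ` satisfies the Horn implications encoded by `S`:
a list `n₀ :: t ∈ S` means `(∀ m ∈ t, m ∈ X) → n₀ ∈ X`. -/
def SatisfiesHorn (S : Set (List ℕ)) (X : Set ℕ) : Prop :=
  ∀ n₀ : ℕ, ∀ t : List ℕ, (n₀ :: t) ∈ S → (∀ m ∈ t, m ∈ X) → n₀ ∈ X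

/-- The quasivariety defined by `S`. -/
def QV (S : Set (List ℕ)) : Set (Set ℕ) := {X | SatisfiesHorn S X}

/-- The closure of `Y`: the smallest element of `QV S` containing `Y`. -/
def QVclosure (S : Set (List ℕ)) (Y : Set ℕ) : Set ℕ :=
  ⋂₀ {X | X ∈ QV S ∧ Y ⊆ X}

/-- `A` is enumeration reducible to `B` via `f`. -/
def EnumRedVia (A B : Set ℕ) (f : ℕ × ℕ → Option (Finset ℕ)) : Prop :=
  Computable f ∧
    ∀ x : ℕ, x ∈ A ↔ ∃ n : ℕ, ∃ F : Finset ℕ, f (x, n) = some F ∧ ↑F ⊆ B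

/-- `A` is enumeration reducible to `B`. -/
def EnumRed (A B : Set ℕ) : Prop := ∃ f : ℕ × ℕ → Option (Finset ℕ), EnumRedVia A B f

/-- `X` is a maximal element of the quasivariety `QV S`. -/
def QVMaximal (S : Set (List ℕ)) (X : Set ℕ) : Prop :=
  X ∈ QV S ∧ ∀ Z ∈ QV S, X ⊆ Z → Z = X ∨ Z = Set.univ

/-!
Fix `b ∉ X` (for `X = ℕ` there is nothing to prove). By maximality, for `x ∉ X` the closure of
`X ∪ {x}` is all of `ℕ` and so contains `b`, while for `x ∈ X` it is `X`, which misses `b`. Hence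
`x ∉ X` iff `b` is reached by forward chaining from finitely many elements of `X ∪ {x}` with
finitely many rules of `S`. Recording also a stage of the enumeration of `S` at which all these
rules have appeared makes such a certificate primitive recursively checkable, and the
enumeration operator lists the finite parts in `X` of all valid certificates.
-/

open Encodable Denumerable Nat.Partrec Filter

theorem QVclosure_mem_QV (S : Set (List ℕ)) (Y : Set ℕ) : QVclosure S Y ∈ QV S :=
  fun n₀ t ht hmem => Set.mem_sInter.2 fun Z hZ =>
    hZ.1 n₀ t ht fun m hm => Set.mem_sInter.1 (hmem m hm) Z hZ

theorem subset_QVclosure (S : Set (List ℕ)) (Y : Set ℕ) : Y ⊆ QVclosure S Y :=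
  fun _ hn => Set.mem_sInter.2 fun _ hZ => hZ.2 hn

theorem QVMaximal.QVclosure_insert_eq_univ {S : Set (List ℕ)} {X : Set ℕ} (hX : QVMaximal S X)
    {x : ℕ} (hx : x ∉ X) : QVclosure S (insert x X) = Set.univ := by
  have hsub : X ⊆ QVclosure S (insert x X) :=
    (Set.subset_insert x X).trans (subset_QVclosure S _)
  refine (hX.2 _ (QVclosure_mem_QV S _) hsub).resolve_left fun h => hx ?_
  exact h ▸ subset_QVclosure S _ (Set.mem_insert x X)

/-- Forward chaining with the rule `(n₀, t)`, which stands for the list `n₀ :: t` of `S`. -/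
def fireRule (K : List ℕ) (r : ℕ × List ℕ) : List ℕ :=
  if ∀ m ∈ r.2, m ∈ K then r.1 :: K else K

def fireRules (K : List ℕ) (D : List (ℕ × List ℕ)) : List ℕ :=
  D.foldl fireRule K

theorem fireRules_append (K : List ℕ) (D₁ D₂ : List (ℕ × List ℕ)) :
    fireRules K (D₁ ++ D₂) = fireRules (fireRules K D₁) D₂ :=
  List.foldl_append

theorem subset_fireRules (K : List ℕ) (D : List (ℕ × List ℕ)) : K ⊆ fireRules K D := by
  induction D generalizing K with
  | nil => exact List.Subset.refl K
  | cons r D ih =>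
    refine fun m hm => ih _ ?_
    unfold fireRule
    split_ifs <;> simp [hm]

theorem fireRules_mono {K K' : List ℕ} (h : K ⊆ K') (D : List (ℕ × List ℕ)) :
    fireRules K D ⊆ fireRules K' D := by
  induction D generalizing K K' with
  | nil => exact h
  | cons r D ih =>
    refine ih fun m hm => ?_
    unfold fireRule at hm ⊢
    by_cases hr : ∀ m ∈ r.2, m ∈ K
    · rw [if_pos hr] at hm
      rw [if_pos fun m hm => h (hr m hm)]
      exact List.cons_subset_cons _ h hm
    · rw [if_neg hr] at hm
      split_ifs <;> simp [h hm]

theorem fireRules_subset_of_mem_QV {S : Set (List ℕ)} {Z : Set ℕ} (hZ : Z ∈ QV S)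
    {D : List (ℕ × List ℕ)} (hD : ∀ r ∈ D, r.1 :: r.2 ∈ S) {K : List ℕ} (hK : ∀ m ∈ K, m ∈ Z) :
    ∀ m ∈ fireRules K D, m ∈ Z := by
  induction D generalizing K with
  | nil => exact hK
  | cons r D ih =>
    refine ih (fun r' hr' => hD r' (List.mem_cons_of_mem r hr')) ?_
    unfold fireRule
    split_ifs with hr
    · exact List.forall_mem_cons.2
        ⟨hZ r.1 r.2 (hD r List.mem_cons_self) fun m hm => hK m (hr m hm), hK⟩
    · exact hK

theorem exists_fireRules_of_mem_QVclosure {S : Set (List ℕ)} {Y : Set ℕ} {b : ℕ}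
    (hb : b ∈ QVclosure S Y) :
    ∃ L D, (∀ a ∈ L, a ∈ Y) ∧ (∀ r ∈ D, r.1 :: r.2 ∈ S) ∧ b ∈ fireRules L D := by
  set Z := {b | ∃ L D, (∀ a ∈ L, a ∈ Y) ∧ (∀ r ∈ D, r.1 :: r.2 ∈ S) ∧ b ∈ fireRules L D}
  have merge : ∀ t : List ℕ, (∀ m ∈ t, m ∈ Z) →
      ∃ L D, (∀ a ∈ L, a ∈ Y) ∧ (∀ r ∈ D, r.1 :: r.2 ∈ S) ∧ t ⊆ fireRules L D := by
    intro t
    induction t with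
    | nil => exact fun _ => ⟨[], [], by simp, by simp, List.nil_subset _⟩
    | cons m t ih =>
      intro ht
      obtain ⟨L₁, D₁, hL₁, hD₁, hm⟩ := ht m List.mem_cons_self
      obtain ⟨L₂, D₂, hL₂, hD₂, ht⟩ := ih fun m' hm' => ht m' (List.mem_cons_of_mem m hm')
      refine ⟨L₁ ++ L₂, D₁ ++ D₂, List.forall_mem_append.2 ⟨hL₁, hL₂⟩,
        List.forall_mem_append.2 ⟨hD₁, hD₂⟩, ?_⟩
      rw [fireRules_append]
      refine List.cons_subset.2
        ⟨subset_fireRules _ D₂ ?_, List.Subset.trans ht (fireRules_mono ?_ D₂)⟩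
      · exact fireRules_mono (List.subset_append_left L₁ L₂) D₁ hm
      · exact List.Subset.trans (List.subset_append_right L₁ L₂) (subset_fireRules _ D₁)
  have hZ : Z ∈ QV S := by
    intro n₀ t hrule ht
    obtain ⟨L, D, hL, hD, ht⟩ := merge t ht
    refine ⟨L, D ++ [(n₀, t)], hL, List.forall_mem_append.2 ⟨hD, by simpa using hrule⟩, ?_⟩
    rw [fireRules_append]
    show n₀ ∈ fireRule (fireRules L D) (n₀, t)
    rw [fireRule, if_pos fun m hm => ht hm]
    exact List.mem_cons_self
  have hYZ : Y ⊆ Z := fun a ha =>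
    ⟨[a], [], List.forall_mem_singleton.2 ha, List.forall_mem_nil _, List.mem_singleton_self a⟩
  exact (Set.sInter_subset_of_mem ⟨hZ, hYZ⟩ : QVclosure S Y ⊆ Z) hb

theorem mem_raise'_iff_foldl (a : ℕ) (l : List ℕ) (n : ℕ) (found : Bool) :
    (l.foldl (fun (p : Bool × ℕ) m => (p.1 || decide (a = m + p.2), m + p.2 + 1)) (found, n)).1 =
      (found || decide (a ∈ raise' l n)) := by
  induction l generalizing n found with
  | nil => simp [raise']
  | cons m l ih => simp [raise', ih, Bool.or_assoc]

theorem mem_ofNat_finset_iff {a n : ℕ} :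
    a ∈ ofNat (Finset ℕ) n ↔ a ∈ raise' (ofNat (List ℕ) n) 0 := by
  show a ∈ Finset.map (eqv ℕ).symm.toEmbedding (raise'Finset (ofNat (List ℕ) n) 0) ↔ _
  simp [raise'Finset, eqv, Finset.mem_def]

theorem primrecRel_mem_finset : PrimrecRel fun (a : ℕ) (s : Finset ℕ) => a ∈ s := by
  have hstep : Primrec₂ fun (a : ℕ × ℕ) (q : (Bool × ℕ) × ℕ) =>
      (q.1.1 || decide (a.1 = q.2 + q.1.2), q.2 + q.1.2 + 1) := by
    have hsum : Primrec fun z : (ℕ × ℕ) × (Bool × ℕ) × ℕ => z.2.2 + z.2.1.2 :=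
      Primrec.nat_add.comp (Primrec.snd.comp Primrec.snd)
        (Primrec.snd.comp (Primrec.fst.comp Primrec.snd))
    exact (Primrec.or.comp (Primrec.fst.comp (Primrec.fst.comp Primrec.snd))
      (Primrec.eq.decide.comp (Primrec.fst.comp Primrec.fst) hsum)).pair
      (Primrec.succ.comp hsum) |>.to₂
  have hfold := Primrec.list_foldl ((Primrec.ofNat (List ℕ)).comp Primrec.snd)
    (Primrec.const (false, 0)) hstep
  have hmem : Primrec₂ fun (a : ℕ) (s : Finset ℕ) => decide (a ∈ s) :=
    Primrec₂.ofNat_iff.2 <| (Primrec.fst.comp hfold).of_eq fun p => by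
      simp [mem_raise'_iff_foldl, mem_ofNat_finset_iff]
  exact Primrec.primrecPred hmem

theorem REPred.exists_primrecRel_monotone {α : Type*} [Primcodable α] {p : α → Prop}
    (hp : REPred p) :
    ∃ T : ℕ → α → Prop, PrimrecRel T ∧ (∀ a, Monotone fun k => T k a) ∧ ∀ a, p a ↔ ∃ k, T k a := by
  obtain ⟨c, hc⟩ := Code.exists_code.1 hp
  refine ⟨fun k a => (Code.evaln k c (encode a)).isSome, ?_, fun a k₁ k₂ hk h => ?_, fun a => ?_⟩
  · exact Primrec.eq.comp (Primrec.option_isSome.comp (Code.primrec_evaln.comp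
      ((Primrec.fst.pair (Primrec.const c)).pair (Primrec.encode.comp Primrec.snd))))
      (Primrec.const true)
  · obtain ⟨y, hy⟩ := Option.isSome_iff_exists.1 h
    exact Option.isSome_iff_exists.2 ⟨y, Code.evaln_mono hk hy⟩
  · have hdom : (Code.eval c (encode a)).Dom ↔ p a := by simp [hc, Part.assert]
    simp only [← hdom, Part.dom_iff_mem, Code.evaln_complete, Option.isSome_iff_exists,
      Option.mem_def]
    exact exists_comm

theorem exists_forall_mem_of_monotone {α : Type*} {T : ℕ → α → Prop}
    (hT : ∀ a, Monotone fun k => T k a) {D : List α} (h : ∀ a ∈ D, ∃ k, T k a) :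
    ∃ k, ∀ a ∈ D, T k a := by
  have : ∀ᶠ k in atTop, ∀ a ∈ {a | a ∈ D}, T k a :=
    (eventually_all_finite D.finite_toSet).2 fun a ha =>
      let ⟨k, hk⟩ := h a ha
      eventually_atTop.2 ⟨k, fun _ hk' => hT a hk' hk⟩
  exact this.exists

theorem primrecRel_mem_list {α : Type*} [Primcodable α] [DecidableEq α] :
    PrimrecRel fun (a : α) (L : List α) => a ∈ L :=
  ((PrimrecRel.exists_mem_list Primrec.eq).comp Primrec.snd Primrec.fst).of_eq fun _ => by simp

theorem primrec_fireRules : Primrec₂ fireRules := by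
  have hstep : Primrec₂ fun (_ : List ℕ × List (ℕ × List ℕ)) (q : List ℕ × ℕ × List ℕ) =>
      fireRule q.1 q.2 :=
    Primrec.ite ((PrimrecRel.forall_mem_list primrecRel_mem_list).comp
        (Primrec.snd.comp (Primrec.snd.comp Primrec.snd)) (Primrec.fst.comp Primrec.snd))
      (Primrec.list_cons.comp (Primrec.fst.comp (Primrec.snd.comp Primrec.snd))
        (Primrec.fst.comp Primrec.snd))
      (Primrec.fst.comp Primrec.snd)
  exact (Primrec.list_foldl Primrec.snd Primrec.fst hstep).of_eq fun _ => rfl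

theorem enumRed_of_primrec {W : Type*} [Primcodable W] {A B : Set ℕ} {P : ℕ → W → Prop}
    {F : W → Finset ℕ} (hP : PrimrecRel P) (hF : Primrec F)
    (hA : ∀ x, x ∈ A ↔ ∃ w, P x w ∧ ↑(F w) ⊆ B) : EnumRed A B := by
  classical
  refine ⟨fun p => (decode p.2 : Option W).bind fun w => if P p.1 w then some (F w) else none,
    ?_, fun x => ?_⟩
  · have hg : Primrec₂ fun (p : ℕ × ℕ) (w : W) => if P p.1 w then some (F w) else none :=
      Primrec.ite (hP.comp (Primrec.fst.comp Primrec.fst) Primrec.snd)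
        (Primrec.option_some.comp (hF.comp Primrec.snd)) (Primrec.const none)
    exact (Primrec.option_bind (Primrec.decode.comp Primrec.snd) hg).to_comp
  · rw [hA]
    constructor
    · rintro ⟨w, hw, hFB⟩
      exact ⟨encode w, F w, by simp [hw], hFB⟩
    · rintro ⟨n, F', hn, hFB⟩
      simp only [Option.bind_eq_some_iff, Option.ite_none_right_eq_some, Option.some.injEq] at hn
      obtain ⟨w, -, hw, rfl⟩ := hn
      exact ⟨w, hw, hFB⟩

/-- `((k, L, D), F)` certifies that `b` is derived from `insert x F`: forward chaining from `L`
with the rules `D`, all of which are confirmed to lie in `S` at stage `k` of the enumeration `T`. -/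
def IsDerivCert (T : ℕ → List ℕ → Prop) (b x : ℕ)
    (w : (ℕ × List ℕ × List (ℕ × List ℕ)) × Finset ℕ) : Prop :=
  (∀ a ∈ w.1.2.1, a = x ∨ a ∈ w.2) ∧ (∀ r ∈ w.1.2.2, T w.1.1 (r.1 :: r.2)) ∧
    b ∈ fireRules w.1.2.1 w.1.2.2

theorem primrecRel_isDerivCert {T : ℕ → List ℕ → Prop} (hT : PrimrecRel T) (b : ℕ) :
    PrimrecRel (IsDerivCert T b) := by
  have hleaf : PrimrecRel fun (a : ℕ) (q : ℕ × Finset ℕ) => a = q.1 ∨ a ∈ q.2 :=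
    (Primrec.eq.comp Primrec.fst (Primrec.fst.comp Primrec.snd)).or
      (primrecRel_mem_finset.comp Primrec.fst (Primrec.snd.comp Primrec.snd))
  have hrule : PrimrecRel fun (r : ℕ × List ℕ) (k : ℕ) => T k (r.1 :: r.2) :=
    hT.comp Primrec.snd (Primrec.list_cons.comp (Primrec.fst.comp Primrec.fst)
      (Primrec.snd.comp Primrec.fst))
  have hL : Primrec fun z : ℕ × (ℕ × List ℕ × List (ℕ × List ℕ)) × Finset ℕ => z.2.1.2.1 :=
    Primrec.fst.comp (Primrec.snd.comp (Primrec.fst.comp Primrec.snd))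
  have hD : Primrec fun z : ℕ × (ℕ × List ℕ × List (ℕ × List ℕ)) × Finset ℕ => z.2.1.2.2 :=
    Primrec.snd.comp (Primrec.snd.comp (Primrec.fst.comp Primrec.snd))
  exact ((PrimrecRel.forall_mem_list hleaf).comp hL
      (Primrec.fst.pair (Primrec.snd.comp Primrec.snd))).and
    (((PrimrecRel.forall_mem_list hrule).comp hD
      (Primrec.fst.comp (Primrec.fst.comp Primrec.snd))).and
    (primrecRel_mem_list.comp (Primrec.const b) (primrec_fireRules.comp hL hD)))

theorem mem_compl_iff_exists_isDerivCert {S : Set (List ℕ)} {X : Set ℕ} (hX : QVMaximal S X)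
    {b : ℕ} (hb : b ∉ X) {T : ℕ → List ℕ → Prop} (hTmono : ∀ l, Monotone fun k => T k l)
    (hST : ∀ l, l ∈ S ↔ ∃ k, T k l) (x : ℕ) :
    x ∈ Xᶜ ↔ ∃ w, IsDerivCert T b x w ∧ ↑w.2 ⊆ X := by
  constructor
  · intro hx
    have hbC : b ∈ QVclosure S (insert x X) := hX.QVclosure_insert_eq_univ hx ▸ Set.mem_univ b
    obtain ⟨L, D, hLX, hDS, hbD⟩ := exists_fireRules_of_mem_QVclosure hbC
    obtain ⟨k, hk⟩ := exists_forall_mem_of_monotone (fun r => hTmono (r.1 :: r.2))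
      fun r hr => (hST _).1 (hDS r hr)
    refine ⟨((k, L, D), L.toFinset.erase x), ⟨fun a ha => ?_, hk, hbD⟩, fun a ha => ?_⟩
    · simpa [ha] using em (a = x)
    · simp only [Finset.mem_coe, Finset.mem_erase, List.mem_toFinset] at ha
      exact (hLX a ha.2).resolve_left ha.1
  · rintro ⟨⟨⟨k, L, D⟩, F⟩, ⟨hL, hD, hbD⟩, hFX⟩ hxX
    refine hb (fireRules_subset_of_mem_QV hX.1 (fun r hr => (hST _).2 ⟨k, hD r hr⟩) ?_ b hbD)
    exact fun a ha => (hL a ha).elim (fun hax => hax ▸ hxX) fun haF => hFX haF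

theorem compl_enumRed_of_maximal_general (S : Set (List ℕ))
    (hS : REPred (· ∈ S))
    (X : Set ℕ) (hX : QVMaximal S X) :
    EnumRed Xᶜ X := by
  by_cases hXu : X = Set.univ
  · exact ⟨fun _ => none, Computable.const none, by simp [hXu]⟩
  obtain ⟨b, hb⟩ := (Set.ne_univ_iff_exists_notMem X).1 hXu
  obtain ⟨T, hT, hTmono, hST⟩ := hS.exists_primrecRel_monotone
  exact enumRed_of_primrec (primrecRel_isDerivCert hT b) Primrec.snd
    (mem_compl_iff_exists_isDerivCert hX hb hTmono hST)

/-- If `X` is maximal in an r.e. quasivariety, then `Xᶜ ≤ₑ X`. -/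
theorem compl_enumRed_of_maximal (S : Set (List ℕ))
    (hne : ∀ l ∈ S, l ≠ []) (hS : REPred (· ∈ S))
    (X : Set ℕ) (hX : QVMaximal S X) :
    EnumRed Xᶜ X :=
  compl_enumRed_of_maximal_general S hS X hX
end

section
/- Let X ⊆ ℕ and let f : ℕ × ℕ → Option (Finset ℕ) be computable with Xᶜ ≤ₑ^f X. Define the partial function g by: g(x) is the least n such that ∃ F : Finset ℕ, f (x, n) = some F ∧ ↑F ⊆ X (undefined if no such n exists), and let G = { Nat.pair x m | g(x) is defined and g(x) = m } ⊆ ℕ. Then G ≤ₑ X. -/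
open Denumerable Encodable

namespace Denumerable

/-- `Primcodable (Finset ℕ)` comes from `Denumerable.finset`, not from `Finset.encodable`: a code
is the code of the list of gaps between the sorted elements. -/
theorem ofNat_finset_nat (n : ℕ) :
    ofNat (Finset ℕ) n = (raise' (ofNat (List ℕ) n) 0).toFinset := by
  change Finset.map (Equiv.refl ℕ).toEmbedding (raise'Finset (ofNat (List ℕ) n) 0) = _
  ext a
  simp only [raise'Finset, Equiv.refl_toEmbedding, Finset.map_refl, List.mem_toFinset]
  exact Iff.rfl

theorem raise'_eq_foldl (l acc : List ℕ) (n : ℕ) :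
    acc ++ raise' l n = (l.foldl (fun p m => (p.1 ++ [m + p.2], m + p.2 + 1)) (acc, n)).1 := by
  induction l generalizing acc n with
  | nil => simp [raise']
  | cons m l ih => simp [raise', ← ih]

theorem lower'_eq_foldl (l acc : List ℕ) (n : ℕ) :
    acc ++ lower' l n = (l.foldl (fun p m => (p.1 ++ [m - p.2], m + 1)) (acc, n)).1 := by
  induction l generalizing acc n with
  | nil => simp [lower']
  | cons m l ih => simp [lower', ← ih]

end Denumerable

namespace Primrec

theorem raise' : Primrec₂ raise' := by
  have hstep : Primrec₂ fun (_ : List ℕ × ℕ) (q : (List ℕ × ℕ) × ℕ) =>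
      (q.1.1 ++ [q.2 + q.1.2], q.2 + q.1.2 + 1) :=
    have hsum := nat_add.comp (snd.comp snd) (snd.comp (fst.comp snd))
    pair (list_append.comp (fst.comp (fst.comp snd)) (list_cons.comp hsum (const [])))
      (succ.comp hsum)
  exact (fst.comp (list_foldl fst (pair (const []) snd) hstep)).of_eq fun p => by
    simp [← raise'_eq_foldl]

theorem lower' : Primrec₂ lower' := by
  have hstep : Primrec₂ fun (_ : List ℕ × ℕ) (q : (List ℕ × ℕ) × ℕ) =>
      (q.1.1 ++ [q.2 - q.1.2], q.2 + 1) :=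
    pair (list_append.comp (fst.comp (fst.comp snd))
        (list_cons.comp (nat_sub.comp (snd.comp snd) (snd.comp (fst.comp snd))) (const [])))
      (succ.comp (snd.comp snd))
  exact (fst.comp (list_foldl fst (pair (const []) snd) hstep)).of_eq fun p => by
    simp [← lower'_eq_foldl]

theorem list_mem : PrimrecRel fun (a : ℕ) (l : List ℕ) => a ∈ l :=
  have h : PrimrecRel fun (a : ℕ) (l : List ℕ) => ∃ b ∈ l, b = a :=
    (PrimrecRel.exists_mem_list Primrec.eq).comp snd fst
  h.of_eq fun a l => by simp

theorem list_sum : Primrec (List.sum : List ℕ → ℕ) :=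
  (list_foldr Primrec.id (const 0) (nat_add.comp (fst.comp snd) (snd.comp snd)).to₂).of_eq
    fun _ => rfl

theorem finset_sort : Primrec fun s : Finset ℕ => s.sort :=
  (raise'.comp ((Primrec.ofNat (List ℕ)).comp Primrec.encode) (const 0)).of_eq fun s => by
    conv_rhs => rw [← ofNat_encode s, ofNat_finset_nat]
    exact ((List.toFinset_sort _ (raise'_sorted _ _).nodup).2
      (raise'_sorted _ _).sortedLE.pairwise).symm

/-- Filtering `List.range (l.sum + 1)` sorts `l` and removes duplicates, so that `lower'`
turns it into the code of `l.toFinset`. -/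
theorem list_toFinset : Primrec (List.toFinset : List ℕ → Finset ℕ) := by
  have hsort : Primrec fun l : List ℕ => (List.range (l.sum + 1)).filter (· ∈ l) :=
    list_mem.listFilter.comp (list_range.comp (succ.comp list_sum)) Primrec.id
  refine ((Primrec.ofNat (Finset ℕ)).comp
    (Primrec.encode.comp (lower'.comp hsort (const 0)))).of_eq fun l => ?_
  rw [ofNat_finset_nat, ofNat_encode, raise_lower' (fun m _ => m.zero_le)
    (List.pairwise_lt_range.filter _).sortedLT]
  ext a
  simpa using fun h => Nat.lt_succ_of_le (List.le_sum_of_mem h)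

theorem finset_union : Primrec₂ ((· ∪ ·) : Finset ℕ → Finset ℕ → Finset ℕ) :=
  (list_toFinset.comp (list_append.comp (finset_sort.comp fst) (finset_sort.comp snd))).of_eq
    fun p => by ext; simp

theorem finset_mem : PrimrecRel fun (a : ℕ) (s : Finset ℕ) => a ∈ s :=
  have h : PrimrecRel fun (a : ℕ) (s : Finset ℕ) => a ∈ s.sort :=
    list_mem.comp fst (finset_sort.comp snd)
  h.of_eq fun a s => Finset.mem_sort _

end Primrec

section OptionBiUnion

variable {α : Type*} [DecidableEq α]

/-- `⋃ n < m, F n`, defined only when every `F n` with `n < m` is. -/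
def optionBiUnion (F : ℕ → Option (Finset α)) : ℕ → Option (Finset α)
  | 0 => some ∅
  | m + 1 => (optionBiUnion F m).bind fun S => (F m).map (S ∪ ·)

theorem exists_optionBiUnion_subset_iff {F : ℕ → Option (Finset α)} {B : Set α} {m : ℕ} :
    (∃ S, optionBiUnion F m = some S ∧ ↑S ⊆ B) ↔ ∀ n < m, ∃ T, F n = some T ∧ ↑T ⊆ B := by
  induction m with
  | zero => simp [optionBiUnion]
  | succ m ih =>
    simp only [optionBiUnion, Option.bind_eq_some_iff, Option.map_eq_some_iff,
      Nat.lt_succ_iff_lt_or_eq]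
    constructor
    · rintro ⟨_, ⟨S, hS, T, hT, rfl⟩, hST⟩
      rw [Finset.coe_union, Set.union_subset_iff] at hST
      rintro n (hn | rfl)
      exacts [ih.1 ⟨S, hS, hST.1⟩ n hn, ⟨T, hT, hST.2⟩]
    · intro h
      obtain ⟨S, hS, hSB⟩ := ih.2 fun n hn => h n (Or.inl hn)
      obtain ⟨T, hT, hTB⟩ := h m (Or.inr rfl)
      exact ⟨S ∪ T, ⟨S, hS, T, hT, rfl⟩, by simp [hSB, hTB]⟩

end OptionBiUnion

theorem Computable.optionBiUnion {α : Type*} [Primcodable α] {F : α → ℕ → Option (Finset ℕ)}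
    (hF : Computable₂ F) : Computable₂ fun a m => optionBiUnion (F a) m := by
  have hstep : Computable₂ fun (p : α × ℕ) (q : ℕ × Option (Finset ℕ)) =>
      q.2.bind fun S => (F p.1 q.1).map (S ∪ ·) :=
    Computable.option_bind (Computable.snd.comp Computable.snd)
      (Computable.option_map (hF.comp (Computable.fst.comp (Computable.fst.comp Computable.fst))
        (Computable.fst.comp (Computable.snd.comp Computable.fst)))
        (Primrec.finset_union.to_comp.comp (Computable.snd.comp Computable.fst)
          Computable.snd).to₂).to₂
  refine (Computable.nat_rec Computable.snd (Computable.const (some ∅)) hstep).of_eq ?_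
  rintro ⟨a, m⟩
  induction m with
  | zero => rfl
  | succ m ih => exact congrArg (fun o => o.bind fun S => (F a m).map (S ∪ ·)) ih

theorem List.exists_forall_lt_getD {P : ℕ → ℕ → Prop} {m : ℕ} (h : ∀ n < m, ∃ t, P n t) :
    ∃ ws : List ℕ, ∀ n < m, P n (ws.getD n 0) := by
  choose! t ht using h
  refine ⟨(List.range m).map t, fun n hn => ?_⟩
  simpa [List.getD_eq_getElem?_getD, hn] using ht n hn

namespace EnumRed

variable {A B C : Set ℕ}

theorem of_computable {g : ℕ → Option (Finset ℕ)} (hg : Computable g) :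
    EnumRed {k | ∃ F, g k = some F ∧ ↑F ⊆ B} B :=
  ⟨fun p => g p.1, hg.comp Computable.fst, fun k => by simp⟩

theorem inter (hA : EnumRed A B) (hC : EnumRed C B) : EnumRed (A ∩ C) B := by
  obtain ⟨f, hf, hfA⟩ := hA
  obtain ⟨g, hg, hgC⟩ := hC
  refine ⟨fun p => (f (p.1, p.2.unpair.1)).bind fun F => (g (p.1, p.2.unpair.2)).map (F ∪ ·),
    ?_, fun k => ?_⟩
  · exact Computable.option_bind
      (hf.comp (Computable.fst.pair (Computable.fst.comp (Computable.unpair.comp Computable.snd))))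
      (Computable.option_map
        (hg.comp ((Computable.fst.comp Computable.fst).pair
          (Computable.snd.comp (Computable.unpair.comp (Computable.snd.comp Computable.fst)))))
        (Primrec.finset_union.to_comp.comp (Computable.snd.comp Computable.fst)
          Computable.snd).to₂).to₂
  rw [Set.mem_inter_iff, hfA, hgC]
  constructor
  · rintro ⟨⟨i, F, hF, hFB⟩, j, G, hG, hGB⟩
    exact ⟨Nat.pair i j, F ∪ G, by simp [hF, hG], by simp [hFB, hGB]⟩
  · rintro ⟨n, _, hS, hSB⟩
    simp only [Option.bind_eq_some_iff, Option.map_eq_some_iff] at hS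
    obtain ⟨F, hF, G, hG, rfl⟩ := hS
    rw [Finset.coe_union, Set.union_subset_iff] at hSB
    exact ⟨⟨_, F, hF, hSB.1⟩, _, G, hG, hSB.2⟩

theorem forall_lt (hA : EnumRed A B) :
    EnumRed {k | ∀ n < k.unpair.2, Nat.pair k.unpair.1 n ∈ A} B := by
  obtain ⟨f, hf, hfA⟩ := hA
  refine ⟨fun p => optionBiUnion
    (fun n => f (Nat.pair p.1.unpair.1 n, (ofNat (List ℕ) p.2).getD n 0)) p.1.unpair.2,
    ?_, fun k => ?_⟩
  · have hF : Computable₂ fun (p : ℕ × ℕ) n =>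
        f (Nat.pair p.1.unpair.1 n, (ofNat (List ℕ) p.2).getD n 0) :=
      hf.comp (Primrec.pair (Primrec₂.natPair.comp
          (Primrec.fst.comp (Primrec.unpair.comp (Primrec.fst.comp Primrec.fst))) Primrec.snd)
        ((Primrec.list_getD 0).comp ((Primrec.ofNat _).comp (Primrec.snd.comp Primrec.fst))
          Primrec.snd)).to_comp
    exact (Computable.optionBiUnion hF).comp Computable.id
      (Computable.snd.comp (Computable.unpair.comp Computable.fst))
  simp only [Set.mem_ofPred_eq, hfA, exists_optionBiUnion_subset_iff]
  constructor
  · intro h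
    obtain ⟨ws, hws⟩ := List.exists_forall_lt_getD h
    exact ⟨encode ws, by simpa using hws⟩
  · rintro ⟨w, hw⟩ n hn
    exact ⟨_, hw n hn⟩

theorem forall_some_exists_mem (hC : EnumRed C B) {g : ℕ → Option (Finset ℕ)}
    (hg : Computable g) : EnumRed {k | ∀ F, g k = some F → ∃ a ∈ F, a ∈ C} B := by
  obtain ⟨f, hf, hfC⟩ := hC
  refine ⟨fun p => (g p.1).elim (some ∅) fun F => if p.2.unpair.1 ∈ F then f p.2.unpair else none,
    ?_, fun k => ?_⟩
  · have hbranch : Computable₂ fun (p : ℕ × ℕ) (F : Finset ℕ) =>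
        if p.2.unpair.1 ∈ F then f p.2.unpair else none :=
      (Computable.cond (Primrec.finset_mem.decide.to_comp.comp
          (Computable.fst.comp (Computable.unpair.comp (Computable.snd.comp Computable.fst)))
          Computable.snd)
        (hf.comp (Computable.unpair.comp (Computable.snd.comp Computable.fst)))
        (Computable.const none)).of_eq fun _ => Bool.cond_decide _ _ _
    exact (Computable.option_casesOn (hg.comp Computable.fst) (Computable.const (some ∅))
      hbranch).of_eq fun p => by cases g p.1 <;> rfl
  cases hk : g k with
  | none => simp [hk]
  | some F =>
    simp only [Set.mem_ofPred_eq, hk, Option.some.injEq, forall_eq', Option.elim_some]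
    constructor
    · rintro ⟨a, ha, haC⟩
      obtain ⟨t, G, hG, hGB⟩ := (hfC a).1 haC
      exact ⟨Nat.pair a t, G, by simp [ha, hG], hGB⟩
    · rintro ⟨c, G, hG, hGB⟩
      split_ifs at hG with ha
      exact ⟨_, ha, (hfC _).2 ⟨_, G, hG, hGB⟩⟩

end EnumRed

/-- The graph of the modulus function `g` (least `n` with `f (x, n) = some F`
and `↑F ⊆ X`), coded via `Nat.pair`, is enumeration reducible to `X`. -/
theorem modulus_graph_enumRed (X : Set ℕ) (f : ℕ × ℕ → Option (Finset ℕ))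
    (hf : EnumRedVia Xᶜ X f) :
    EnumRed
      {k : ℕ | ∃ x m : ℕ, k = Nat.pair x m ∧
        (∃ F : Finset ℕ, f (x, m) = some F ∧ ↑F ⊆ X) ∧
        (∀ n < m, ¬ ∃ F : Finset ℕ, f (x, n) = some F ∧ ↑F ⊆ X)}
      X := by
  have hfu : Computable fun k : ℕ => f k.unpair := hf.1.comp Computable.unpair
  have hrefuted := EnumRed.forall_some_exists_mem ⟨f, hf⟩ hfu
  convert (EnumRed.of_computable hfu).inter hrefuted.forall_lt using 1
  ext k
  obtain ⟨x, m, rfl⟩ : ∃ x m, k = Nat.pair x m := ⟨_, _, (Nat.pair_unpair k).symm⟩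
  simp [Set.not_subset]
end

section
/- Let n : ℕ and let N = Subgroup.normalClosure T for some finite set T ⊆ FreeGroup (Fin n), where N is normal and the quotient group FreeGroup (Fin n) ⧸ N is a simple group (IsSimpleGroup). Then the word problem W(N) is computable (ComputablePred for membership in W(N), via the encoding of List (Fin n × Bool) into ℕ). In other words, a finitely presented simple group has decidable word problem. -/
/-- The word problem of the marked group `FreeGroup (Fin n) ⧸ N`: the set of
words over the generators and their inverses whose product lies in `N`. -/
def wordProblem (n : ℕ) (N : Subgroup (FreeGroup (Fin n))) :
    Set (List (Fin n × Bool)) :=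
  {l : List (Fin n × Bool) |
    (l.map (fun p => cond p.2 (FreeGroup.of p.1) (FreeGroup.of p.1)⁻¹)).prod ∈ N}

/-!
Membership of a word `w` in the normal closure `N` of finitely many relators is witnessed by a
finite certificate: a list of conjugates of relators and their inverses whose product freely
reduces to the same word as `w`. Checking a certificate is primitive recursive, so the word
problem is recursively enumerable. Simplicity of `F ⧸ N` makes the complement enumerable too:
`w ∉ N` exactly when adding `w` as a relator kills the group, i.e. when every generator lies in
the normal closure of the enlarged set of relators, which again has finite certificates. By
Post's theorem the word problem is decidable.
-/

section Computability

variable {α β : Type*} [Primcodable α] [Primcodable β]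

theorem PrimrecRel.rePred_exists {R : α → β → Prop} (hR : PrimrecRel R) :
    REPred fun a => ∃ b, R a b := by
  classical
  have hsearch : Computable₂ fun (a : α) (k : ℕ) =>
      ((Encodable.decode (α := β) k).map fun b => decide (R a b)).getD false :=
    (Primrec.option_getD.comp (Primrec.option_map (Primrec.decode.comp Primrec.snd)
      (hR.decide.comp (Primrec.fst.comp Primrec.fst) Primrec.snd).to₂)
      (Primrec.const false)).to_comp
  refine (Partrec.rfind hsearch.partrec₂).dom_re.of_eq fun a => ?_
  constructor
  · rintro ⟨k, hk, -⟩
    cases hb : Encodable.decode (α := β) k with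
    | none => simp [hb] at hk
    | some b => exact ⟨b, by simpa [hb] using hk⟩
  · rintro ⟨b, hb⟩
    exact ⟨Encodable.encode b, by simpa using hb, by simp⟩

theorem PrimrecRel.rePred_forall_fin_exists {n : ℕ} {R : α → Fin n → β → Prop}
    (hR : PrimrecRel fun (a : α) (p : Fin n × β) => R a p.1 p.2) :
    REPred fun a => ∀ i, ∃ b, R a i b := by
  have hcoord : PrimrecRel fun (i : Fin n) (x : α × (Fin n → β)) => R x.1 i (x.2 i) :=
    hR.comp (Primrec.fst.comp Primrec.snd)
      (Primrec.fst.pair (Primrec.fin_app.comp (Primrec.snd.comp Primrec.snd) Primrec.fst))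
  have hall : PrimrecRel fun (a : α) (f : Fin n → β) => ∀ i ∈ List.finRange n, R a i (f i) :=
    hcoord.forall_mem_list.comp (Primrec.const _) Primrec.id
  exact hall.rePred_exists.of_eq fun a => by simp [Classical.skolem]

end Computability

namespace Subgroup

variable {G : Type*} [Group G]

theorem eq_or_eq_top_of_le_of_isSimpleGroup_quotient {N M : Subgroup G} [N.Normal] [M.Normal]
    [IsSimpleGroup (G ⧸ N)] (hNM : N ≤ M) : M = N ∨ M = ⊤ := by
  have hmap : (M.map (QuotientGroup.mk' N)).Normal :=
    Normal.map inferInstance _ (QuotientGroup.mk'_surjective N)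
  have hker : (QuotientGroup.mk' N).ker ≤ M := (QuotientGroup.ker_mk' N).le.trans hNM
  refine hmap.eq_bot_or_eq_top.imp (fun h => ?_) (fun h => ?_)
  · rw [map_eq_bot_iff, QuotientGroup.ker_mk'] at h
    exact le_antisymm h hNM
  · rw [← comap_map_eq_self hker, h, comap_top]

theorem normalClosure_insert_eq_top_iff_notMem {T : Set G}
    [IsSimpleGroup (G ⧸ normalClosure T)] {x : G} :
    normalClosure (insert x T) = ⊤ ↔ x ∉ normalClosure T := by
  have hx : x ∈ normalClosure (insert x T) := subset_normalClosure (Set.mem_insert x T)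
  constructor
  · intro htop hxT
    have hle : normalClosure (insert x T) ≤ normalClosure T :=
      normalClosure_le_normal (Set.insert_subset hxT subset_normalClosure)
    exact QuotientGroup.nontrivial_iff.1 inferInstance (top_le_iff.1 (htop ▸ hle))
  · intro hxT
    refine (eq_or_eq_top_of_le_of_isSimpleGroup_quotient
      (normalClosure_mono (Set.subset_insert x T))).resolve_left fun h => hxT ?_
    exact h ▸ hx

end Subgroup

namespace FreeGroup

variable {α : Type*}

theorem mk_eq_prod_map_cond (L : List (α × Bool)) :
    mk L = (L.map fun p => cond p.2 (of p.1) (of p.1)⁻¹).prod := by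
  rw [← lift_mk, lift_of_apply]

theorem mk_eq_mk_iff_reduce_eq_reduce [DecidableEq α] {L₁ L₂ : List (α × Bool)} :
    mk L₁ = mk L₂ ↔ reduce L₁ = reduce L₂ :=
  ⟨reduce.sound, reduce.exact⟩

theorem eq_top_iff_forall_of_mem {H : Subgroup (FreeGroup α)} : H = ⊤ ↔ ∀ a, of a ∈ H := by
  rw [eq_top_iff, ← closure_range_of, Subgroup.closure_le, Set.range_subset_iff]
  rfl

theorem exists_list_image_mk_eq [DecidableEq α] {T : Set (FreeGroup α)} (hT : T.Finite) :
    ∃ B : List (List (α × Bool)), mk '' {b | b ∈ B} = T := by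
  obtain ⟨s, rfl⟩ := hT.exists_finset_coe
  exact ⟨s.toList.map toWord, by ext; simp [mk_toWord]⟩

section Certificates

variable (B : List (List (α × Bool)))

/-- The entry `(g, i, s)` stands for `g rᵢ g⁻¹` or `g rᵢ⁻¹ g⁻¹` (as `s` is `true` or `false`),
where `rᵢ` is the `i`-th word of `B`. An index out of range reads the empty word, which is
harmless since it represents `1`. -/
def conjWord (e : List (α × Bool) × ℕ × Bool) : List (α × Bool) :=
  e.1 ++ cond e.2.2 (B.getD e.2.1 []) (invRev (B.getD e.2.1 [])) ++ invRev e.1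

def certWord (c : List (List (α × Bool) × ℕ × Bool)) : List (α × Bool) :=
  c.flatMap (conjWord B)

theorem mk_conjWord (g : List (α × Bool)) (i : ℕ) (s : Bool) :
    mk (conjWord B (g, i, s)) =
      mk g * cond s (mk (B.getD i [])) (mk (B.getD i []))⁻¹ * (mk g)⁻¹ := by
  cases s <;> simp [conjWord, mul_mk, inv_mk]

theorem mk_certWord (c : List (List (α × Bool) × ℕ × Bool)) :
    mk (certWord B c) = (c.map fun e => mk (conjWord B e)).prod := by
  induction c with
  | nil => rfl
  | cons e c ih => rw [certWord, List.flatMap_cons, ← mul_mk, ← certWord, ih]; rfl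

theorem certWord_append (c₁ c₂ : List (List (α × Bool) × ℕ × Bool)) :
    certWord B (c₁ ++ c₂) = certWord B c₁ ++ certWord B c₂ :=
  List.flatMap_append

theorem mk_conjWord_mem_normalClosure (e : List (α × Bool) × ℕ × Bool) :
    mk (conjWord B e) ∈ Subgroup.normalClosure (mk '' {b | b ∈ B}) := by
  obtain ⟨g, i, s⟩ := e
  have hrel : mk (B.getD i []) ∈ Subgroup.normalClosure (mk '' {b | b ∈ B}) := by
    rcases lt_or_ge i B.length with hi | hi
    · rw [List.getD_eq_getElem _ _ hi]
      exact Subgroup.subset_normalClosure ⟨_, List.getElem_mem hi, rfl⟩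
    · rw [List.getD_eq_default _ _ hi, ← one_eq_mk]
      exact one_mem _
  rw [mk_conjWord]
  refine Subgroup.normalClosure_normal.conj_mem _ ?_ _
  cases s
  · exact inv_mem hrel
  · exact hrel

theorem exists_mk_conjWord_eq {x : FreeGroup α}
    (hx : x ∈ Group.conjugatesOfSet (mk '' {b | b ∈ B})) (s : Bool) :
    ∃ e, mk (conjWord B e) = cond s x x⁻¹ := by
  obtain ⟨_, ⟨b, hb, rfl⟩, hconj⟩ := Group.mem_conjugatesOfSet_iff.1 hx
  obtain ⟨g, rfl⟩ := isConj_iff.1 hconj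
  obtain ⟨g, rfl⟩ := Quot.exists_rep g
  obtain ⟨i, hi, rfl⟩ := List.getElem_of_mem hb
  refine ⟨(g, i, s), ?_⟩
  rw [mk_conjWord, List.getD_eq_getElem _ _ hi, quot_mk_eq_mk]
  cases s <;> simp

theorem mem_normalClosure_iff_exists_mk_certWord_eq {x : FreeGroup α} :
    x ∈ Subgroup.normalClosure (mk '' {b | b ∈ B}) ↔ ∃ c, mk (certWord B c) = x := by
  constructor
  · intro hx
    induction hx using Subgroup.closure_induction'' with
    | mem x hx =>
      obtain ⟨e, he⟩ := exists_mk_conjWord_eq B hx true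
      exact ⟨[e], by simpa [certWord] using he⟩
    | inv_mem x hx =>
      obtain ⟨e, he⟩ := exists_mk_conjWord_eq B hx false
      exact ⟨[e], by simpa [certWord] using he⟩
    | one => exact ⟨[], rfl⟩
    | mul x y _ _ hx hy =>
      obtain ⟨c₁, rfl⟩ := hx
      obtain ⟨c₂, rfl⟩ := hy
      exact ⟨c₁ ++ c₂, by rw [certWord_append, mul_mk]⟩
  · rintro ⟨c, rfl⟩
    rw [mk_certWord]
    exact list_prod_mem fun x hx => by
      obtain ⟨e, -, rfl⟩ := List.mem_map.1 hx
      exact mk_conjWord_mem_normalClosure B e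

theorem notMem_normalClosure_iff_forall_exists_mk_certWord_eq
    [IsSimpleGroup (FreeGroup α ⧸ Subgroup.normalClosure (mk '' {b | b ∈ B}))]
    (w : List (α × Bool)) :
    mk w ∉ Subgroup.normalClosure (mk '' {b | b ∈ B}) ↔
      ∀ a, ∃ c, mk (certWord (w :: B) c) = of a := by
  have hrelators : insert (mk w) (mk '' {b | b ∈ B}) = mk '' {b | b ∈ w :: B} := by
    rw [← Set.image_insert_eq]
    congr 1
    ext
    simp
  rw [← Subgroup.normalClosure_insert_eq_top_iff_notMem, eq_top_iff_forall_of_mem, hrelators]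
  simp only [mem_normalClosure_iff_exists_mk_certWord_eq]

end Certificates

section Primrec

variable [Primcodable α]

theorem primrec_invRev : Primrec (invRev : List (α × Bool) → List (α × Bool)) :=
  Primrec.list_reverse.comp (Primrec.list_map Primrec.id
    (Primrec.fst.comp Primrec.snd |>.pair (Primrec.not.comp (Primrec.snd.comp Primrec.snd))).to₂)

theorem primrec_reduce [DecidableEq α] :
    Primrec (reduce : List (α × Bool) → List (α × Bool)) := by
  have hstep : Primrec₂ fun (x : α × Bool) (L : List (α × Bool)) =>
      (List.casesOn L [x] fun hd tl =>
        if x.1 = hd.1 ∧ x.2 = !hd.2 then tl else x :: hd :: tl : List (α × Bool)) := by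
    have hcancel : PrimrecRel fun (x : α × Bool) (hd : α × Bool) => x.1 = hd.1 ∧ x.2 = !hd.2 :=
      (Primrec.eq.comp (Primrec.fst.comp Primrec.fst) (Primrec.fst.comp Primrec.snd)).and
        (Primrec.eq.comp (Primrec.snd.comp Primrec.fst)
          (Primrec.not.comp (Primrec.snd.comp Primrec.snd)))
    exact (Primrec.list_casesOn Primrec.snd (Primrec.list_cons.comp Primrec.fst (Primrec.const []))
      (Primrec.ite (hcancel.comp (Primrec.fst.comp Primrec.fst) (Primrec.fst.comp Primrec.snd))
        (Primrec.snd.comp Primrec.snd)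
        (Primrec.list_cons.comp (Primrec.fst.comp Primrec.fst)
          (Primrec.list_cons.comp (Primrec.fst.comp Primrec.snd)
            (Primrec.snd.comp Primrec.snd)))).to₂).to₂
  refine (Primrec.list_foldr Primrec.id (Primrec.const [])
    (hstep.comp (Primrec.fst.comp Primrec.snd) (Primrec.snd.comp Primrec.snd)).to₂).of_eq
    fun L => ?_
  induction L with
  | nil => rfl
  | cons x L ih =>
    simp only [id] at ih ⊢
    rw [List.foldr_cons, ih]
    rfl

theorem primrec_certWord :
    Primrec₂ (certWord : List (List (α × Bool)) → List (List (α × Bool) × ℕ × Bool) → _) := by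
  have hrel : Primrec fun p : List (List (α × Bool)) × (List (α × Bool) × ℕ × Bool) =>
      p.1.getD p.2.2.1 [] :=
    (Primrec.list_getD []).comp Primrec.fst (Primrec.fst.comp (Primrec.snd.comp Primrec.snd))
  have hconj : Primrec₂ (conjWord : List (List (α × Bool)) → _) :=
    Primrec.list_append.comp
      (Primrec.list_append.comp (Primrec.fst.comp Primrec.snd)
        (Primrec.cond (Primrec.snd.comp (Primrec.snd.comp Primrec.snd)) hrel
          (primrec_invRev.comp hrel)))
      (primrec_invRev.comp (Primrec.fst.comp Primrec.snd))
  exact Primrec.list_flatten.comp (Primrec.list_map Primrec.snd (hconj.comp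
    (Primrec.fst.comp Primrec.fst) Primrec.snd).to₂)

theorem primrecRel_mk_certWord_eq_mk [DecidableEq α] :
    PrimrecRel fun (p : List (List (α × Bool)) × List (α × Bool))
      (c : List (List (α × Bool) × ℕ × Bool)) => mk (certWord p.1 c) = mk p.2 :=
  (Primrec.eq.comp (primrec_reduce.comp (primrec_certWord.comp (Primrec.fst.comp Primrec.fst)
    Primrec.snd)) (primrec_reduce.comp (Primrec.snd.comp Primrec.fst))).of_eq
    fun _ => mk_eq_mk_iff_reduce_eq_reduce.symm

end Primrec

end FreeGroup

theorem mem_wordProblem_iff {n : ℕ} {N : Subgroup (FreeGroup (Fin n))} {w : List (Fin n × Bool)} :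
    w ∈ wordProblem n N ↔ FreeGroup.mk w ∈ N := by
  rw [wordProblem, Set.mem_ofPred_eq, ← FreeGroup.mk_eq_prod_map_cond]

open FreeGroup in
/-- A finitely presented simple group has decidable word problem. -/
theorem wordProblem_computable_of_fp_simple (n : ℕ)
    (T : Set (FreeGroup (Fin n))) (hT : T.Finite)
    (hsimple : IsSimpleGroup (FreeGroup (Fin n) ⧸ Subgroup.normalClosure T)) :
    ComputablePred (· ∈ wordProblem n (Subgroup.normalClosure T)) := by
  obtain ⟨B, rfl⟩ := exists_list_image_mk_eq hT
  have hmem : REPred fun w : List (Fin n × Bool) => ∃ c, mk (certWord B c) = mk w :=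
    (primrecRel_mk_certWord_eq_mk.comp₂ ((Primrec.const B).pair Primrec.fst).to₂
      Primrec.snd.to₂).rePred_exists
  have hnotMem : REPred fun w : List (Fin n × Bool) =>
      ∀ a : Fin n, ∃ c, mk (certWord (w :: B) c) = mk [(a, true)] :=
    (primrecRel_mk_certWord_eq_mk.comp₂
      ((Primrec.list_cons.comp Primrec.fst (Primrec.const B)).pair
        (Primrec.list_cons.comp ((Primrec.fst.comp Primrec.snd).pair (Primrec.const true))
          (Primrec.const []))).to₂
      (Primrec.snd.comp Primrec.snd).to₂).rePred_forall_fin_exists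
  refine ComputablePred.computable_iff_re_compl_re'.2
    ⟨hmem.of_eq fun w => ?_, hnotMem.of_eq fun w => ?_⟩
  · rw [mem_wordProblem_iff, mem_normalClosure_iff_exists_mk_certWord_eq]
  · rw [mem_wordProblem_iff, notMem_normalClosure_iff_forall_exists_mk_certWord_eq]
    rfl
end
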